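/- With the setup of the preceding construction, each state |φ_{n,m,l}⟩ = (1/√(d₁d₂)) Σ_{i,j} ω_{d₁}^{ni} ω_{d₂}^{mj} |i⟩ ⊗ |j⟩ ⊗ |L(l, f(i,j))⟩ is absolutely maximally entangled: its reduced density matrices on the three subsystems equal I_{d₁}/d₁, I_{d₂}/d₂, and I_{d₁d₂}/(d₁d₂) respectively. -/

import Mathlib

/-!
The state has the form `ψ(i, j, r) = u(i, j) · [g(i, j) = r]`, where the amplitude `u` has the
constant modulus `1/√(d₁d₂)` (the phases cancel against their conjugates) and
`g(i, j) = L(l, f(i, j))` is a bijection `Z_{d₁} × Z_{d₂} → Z_{d₁d₂}`, since `f` is and the row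
`L l` of a Latin square is. Every entry of a reduced density matrix is then `|u|²` times the
number of pairs `(i, j)` compatible with both indices: injectivity of `g` kills the off-diagonal
entries, and the diagonal entries count `d₂`, `d₁` and `1` pairs respectively.
-/

open Complex

/-- Component of `|φ_{n,m,l}⟩` at `|i⟩⊗|j⟩⊗|r⟩`, with `f(i,j) = d₂·i + j`. -/
noncomputable def phiC2 (d₁ d₂ : ℕ)
    (L : ZMod (d₁ * d₂) → ZMod (d₁ * d₂) → ZMod (d₁ * d₂))
    (n : ZMod d₁) (m : ZMod d₂) (l : ZMod (d₁ * d₂))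
    (i : ZMod d₁) (j : ZMod d₂) (r : ZMod (d₁ * d₂)) : ℂ :=
  ((Real.sqrt (d₁ * d₂) : ℂ))⁻¹ *
    Complex.exp (2 * Real.pi * Complex.I / d₁) ^ (n.val * i.val) *
    Complex.exp (2 * Real.pi * Complex.I / d₂) ^ (m.val * j.val) *
    (if L l (((d₂ * i.val + j.val : ℕ)) : ZMod (d₁ * d₂)) = r then 1 else 0)

open ComplexConjugate

section graphState

variable {α β γ : Type*} [DecidableEq γ]

/-- The tripartite state `∑_{a,b} u a b |a⟩|b⟩|g a b⟩`. -/
def graphState (u : α → β → ℂ) (g : α → β → γ) (a : α) (b : β) (r : γ) : ℂ :=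
  u a b * if g a b = r then 1 else 0

variable {u : α → β → ℂ} {g : α → β → γ} {c : ℂ}

theorem graphState_mul_conj_of_injective [DecidableEq α] [DecidableEq β]
    (hu : ∀ a b, u a b * conj (u a b) = c)
    (hg : (Function.uncurry g).Injective) (a a' : α) (b b' : β) (r : γ) :
    graphState u g a b r * conj (graphState u g a' b' r) =
      if a = a' ∧ b = b' ∧ g a b = r then c else 0 := by
  by_cases hr : g a b = r
  · by_cases hr' : g a' b' = r
    · have hab : Function.uncurry g (a, b) = Function.uncurry g (a', b') := hr.trans hr'.symm
      obtain ⟨rfl, rfl⟩ := Prod.mk.inj (hg hab)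
      simp [graphState, hr, hu]
    · have : ¬(a = a' ∧ b = b' ∧ g a b = r) := by rintro ⟨rfl, rfl, h⟩; exact hr' h
      simp [graphState, hr', this]
  · simp [graphState, hr]

theorem graphState_mul_conj_self (hu : ∀ a b, u a b * conj (u a b) = c)
    (a : α) (b : β) (r r' : γ) :
    graphState u g a b r * conj (graphState u g a b r') =
      if g a b = r ∧ r = r' then c else 0 := by
  by_cases hr : g a b = r
  · subst hr
    by_cases hr' : g a b = r' <;> simp [graphState, hr', hu]
  · simp [graphState, hr]

theorem graphState_reduced_left [Fintype β] [Fintype γ] [DecidableEq α] [DecidableEq β]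
    (hu : ∀ a b, u a b * conj (u a b) = c)
    (hg : (Function.uncurry g).Injective) (a a' : α) :
    ∑ b, ∑ r, graphState u g a b r * conj (graphState u g a' b r) =
      if a = a' then Fintype.card β * c else 0 := by
  simp only [graphState_mul_conj_of_injective hu hg]
  split_ifs <;> simp [*]

theorem graphState_reduced_middle [Fintype α] [Fintype γ] [DecidableEq α] [DecidableEq β]
    (hu : ∀ a b, u a b * conj (u a b) = c)
    (hg : (Function.uncurry g).Injective) (b b' : β) :
    ∑ a, ∑ r, graphState u g a b r * conj (graphState u g a b' r) =
      if b = b' then Fintype.card α * c else 0 := by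
  simp only [graphState_mul_conj_of_injective hu hg]
  split_ifs <;> simp [*]

theorem graphState_reduced_right [Fintype α] [Fintype β] [Fintype γ]
    (hu : ∀ a b, u a b * conj (u a b) = c)
    (hg : (Function.uncurry g).Bijective) (r r' : γ) :
    ∑ a, ∑ b, graphState u g a b r * conj (graphState u g a b r') =
      if r = r' then c else 0 := by
  simp only [graphState_mul_conj_self hu]
  rw [← Fintype.sum_prod_type']
  refine (hg.sum_comp fun s => if s = r ∧ r = r' then c else 0).trans ?_
  simp [ite_and]

end graphState

def pairIndex (d₁ d₂ : ℕ) (i : ZMod d₁) (j : ZMod d₂) : ZMod (d₁ * d₂) :=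
  ((d₂ * i.val + j.val : ℕ) : ZMod (d₁ * d₂))

theorem val_pairIndex (d₁ d₂ : ℕ) [NeZero d₁] [NeZero d₂] (i : ZMod d₁) (j : ZMod d₂) :
    (pairIndex d₁ d₂ i j).val = d₂ * i.val + j.val :=
  ZMod.val_cast_of_lt (Nat.mul_add_lt_mul_of_lt_of_lt i.val_lt j.val_lt)

theorem pairIndex_bijective (d₁ d₂ : ℕ) [NeZero d₁] [NeZero d₂] :
    (Function.uncurry (pairIndex d₁ d₂)).Bijective := by
  refine (Fintype.bijective_iff_injective_and_card _).2 ⟨?_, by simp [ZMod.card]⟩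
  rintro ⟨i, j⟩ ⟨i', j'⟩ h
  have hval := congrArg ZMod.val h
  simp only [Function.uncurry_apply_pair, val_pairIndex] at hval
  obtain ⟨hi, hj⟩ := (Nat.div_mod_unique (NeZero.pos d₂)).2
    ⟨(add_comm _ _).trans hval, j.val_lt⟩
  obtain ⟨hi', hj'⟩ := (Nat.div_mod_unique (NeZero.pos d₂)).2 ⟨add_comm _ _, j'.val_lt⟩
  exact Prod.ext (ZMod.val_injective _ (hi.symm.trans hi'))
    (ZMod.val_injective _ (hj.symm.trans hj'))

theorem norm_exp_two_pi_I_div (d : ℕ) : ‖exp (2 * Real.pi * I / d)‖ = 1 := by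
  simp [Complex.norm_exp]

noncomputable def phiC2Amplitude (d₁ d₂ : ℕ) (n : ZMod d₁) (m : ZMod d₂) (i : ZMod d₁)
    (j : ZMod d₂) : ℂ :=
  ((Real.sqrt (d₁ * d₂) : ℂ))⁻¹ * exp (2 * Real.pi * I / d₁) ^ (n.val * i.val) *
    exp (2 * Real.pi * I / d₂) ^ (m.val * j.val)

theorem phiC2Amplitude_mul_conj (d₁ d₂ : ℕ) (n : ZMod d₁) (m : ZMod d₂) (i : ZMod d₁)
    (j : ZMod d₂) :
    phiC2Amplitude d₁ d₂ n m i j * conj (phiC2Amplitude d₁ d₂ n m i j) = ((d₁ : ℂ) * d₂)⁻¹ := by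
  rw [Complex.mul_conj']
  simp only [phiC2Amplitude, norm_mul, norm_pow, norm_exp_two_pi_I_div, one_pow, mul_one,
    norm_inv, Complex.norm_real, Real.norm_of_nonneg (Real.sqrt_nonneg _)]
  rw [← Complex.ofReal_pow, inv_pow, Real.sq_sqrt (by positivity)]
  simp

theorem phiC2_eq_graphState (d₁ d₂ : ℕ)
    (L : ZMod (d₁ * d₂) → ZMod (d₁ * d₂) → ZMod (d₁ * d₂))
    (n : ZMod d₁) (m : ZMod d₂) (l : ZMod (d₁ * d₂)) :
    phiC2 d₁ d₂ L n m l =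
      graphState (phiC2Amplitude d₁ d₂ n m) (fun i j => L l (pairIndex d₁ d₂ i j)) :=
  rfl

theorem phiC2_absolutely_maximally_entangled_general (d₁ d₂ : ℕ) [NeZero d₁] [NeZero d₂]
    [NeZero (d₁ * d₂)]
    (L : ZMod (d₁ * d₂) → ZMod (d₁ * d₂) → ZMod (d₁ * d₂))
    (hrow : ∀ l, Function.Bijective (L l))
    (n : ZMod d₁) (m : ZMod d₂) (l : ZMod (d₁ * d₂)) :
    (∀ i i' : ZMod d₁,
      (∑ j : ZMod d₂, ∑ r : ZMod (d₁ * d₂),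
        phiC2 d₁ d₂ L n m l i j r * (starRingEnd ℂ) (phiC2 d₁ d₂ L n m l i' j r)) =
        if i = i' then (d₁ : ℂ)⁻¹ else 0) ∧
    (∀ j j' : ZMod d₂,
      (∑ i : ZMod d₁, ∑ r : ZMod (d₁ * d₂),
        phiC2 d₁ d₂ L n m l i j r * (starRingEnd ℂ) (phiC2 d₁ d₂ L n m l i j' r)) =
        if j = j' then (d₂ : ℂ)⁻¹ else 0) ∧
    (∀ r r' : ZMod (d₁ * d₂),
      (∑ i : ZMod d₁, ∑ j : ZMod d₂,
        phiC2 d₁ d₂ L n m l i j r * (starRingEnd ℂ) (phiC2 d₁ d₂ L n m l i j r')) =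
        if r = r' then ((d₁ : ℂ) * d₂)⁻¹ else 0) := by
  have hu := phiC2Amplitude_mul_conj d₁ d₂ n m
  have hg : (Function.uncurry fun i j => L l (pairIndex d₁ d₂ i j)).Bijective :=
    (hrow l).comp (pairIndex_bijective d₁ d₂)
  have hd₁ : (d₁ : ℂ) ≠ 0 := NeZero.ne _
  have hd₂ : (d₂ : ℂ) ≠ 0 := NeZero.ne _
  rw [phiC2_eq_graphState]
  refine ⟨fun i i' => ?_, fun j j' => ?_, graphState_reduced_right hu hg⟩
  · rw [graphState_reduced_left hu hg.1, ZMod.card]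
    field_simp
  · rw [graphState_reduced_middle hu hg.1, ZMod.card]
    field_simp

/-- Each `|φ_{n,m,l}⟩` is absolutely maximally entangled: its reduced
density matrices on the three subsystems are `I_{d₁}/d₁`, `I_{d₂}/d₂` and
`I_{d₁d₂}/(d₁d₂)`. -/
theorem phiC2_absolutely_maximally_entangled (d₁ d₂ : ℕ) [NeZero d₁] [NeZero d₂]
    [NeZero (d₁ * d₂)]
    (L : ZMod (d₁ * d₂) → ZMod (d₁ * d₂) → ZMod (d₁ * d₂))
    (hrow : ∀ l, Function.Bijective (L l))
    (hcol : ∀ c, Function.Bijective fun l => L l c)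
    (n : ZMod d₁) (m : ZMod d₂) (l : ZMod (d₁ * d₂)) :
    (∀ i i' : ZMod d₁,
      (∑ j : ZMod d₂, ∑ r : ZMod (d₁ * d₂),
        phiC2 d₁ d₂ L n m l i j r * (starRingEnd ℂ) (phiC2 d₁ d₂ L n m l i' j r)) =
        if i = i' then (d₁ : ℂ)⁻¹ else 0) ∧
    (∀ j j' : ZMod d₂,
      (∑ i : ZMod d₁, ∑ r : ZMod (d₁ * d₂),
        phiC2 d₁ d₂ L n m l i j r * (starRingEnd ℂ) (phiC2 d₁ d₂ L n m l i j' r)) =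
        if j = j' then (d₂ : ℂ)⁻¹ else 0) ∧
    (∀ r r' : ZMod (d₁ * d₂),
      (∑ i : ZMod d₁, ∑ j : ZMod d₂,
        phiC2 d₁ d₂ L n m l i j r * (starRingEnd ℂ) (phiC2 d₁ d₂ L n m l i j r')) =
        if r = r' then ((d₁ : ℂ) * d₂)⁻¹ else 0) :=
  phiC2_absolutely_maximally_entangled_general d₁ d₂ L hrow n m l
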